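/- Assume 1-H < Hd < 1, let κ > 0 and β > 0 with 1-Hd < Hβ < min(H, 2-2Hd). Then there is a constant c independent of n and K such that for all n ∈ ℕ, s > 0, 0 < K < ns/2, y ∈ ℝ^d: ∫_K^{ns/2} u^{-Hd} [∫_{ℝ^d} e^{-κ|ξ|²(s - u/n)^{2H}} |1 - e^{i ξ·y / n^H}| dξ] du ≤ c n^{1-Hd-Hβ} s^{1-2Hd-Hβ} |y|^β. -/

import Mathlib

/-!
For `u < ns/2` we have `s - u/n ≥ s/2`, so every inner integral is dominated by the Gaussian
`exp (-a₀ |ξ|²)` with `a₀ = κ (s/2)^(2H)`. Since `Hβ < H` forces `β ≤ 1`, the phase factor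
satisfies `|1 - e^{iθ}| ≤ 2 |θ|^β ≤ 2 (|ξ| |y| / n^H)^β`, and the `β`-th Gaussian moment scales
as `a₀^(-(d+β)/2)`, which produces `n^(-Hβ) s^(-H(d+β)) |y|^β` uniformly in `u`. The remaining
`u`-integral is at most `∫₀^{ns/2} u^(-Hd) du = (ns/2)^(1-Hd) / (1-Hd)` because `Hd < 1`.
-/

open MeasureTheory Set Real Module

theorem norm_one_sub_exp_I_mul_le_two_mul_rpow {β : ℝ} (hβ0 : 0 ≤ β) (hβ1 : β ≤ 1) (θ : ℝ) :
    ‖1 - Complex.exp (Complex.I * θ)‖ ≤ 2 * |θ| ^ β := by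
  rcases le_or_gt |θ| 1 with hθ | hθ
  · calc ‖1 - Complex.exp (Complex.I * θ)‖ ≤ |θ| := by
          rw [norm_sub_rev]; exact Real.norm_exp_I_mul_ofReal_sub_one_le
      _ ≤ |θ| ^ β := self_le_rpow_of_le_one (abs_nonneg θ) hθ hβ1
      _ ≤ 2 * |θ| ^ β := by linarith [rpow_nonneg (abs_nonneg θ) β]
  · calc ‖1 - Complex.exp (Complex.I * θ)‖ ≤ ‖(1 : ℂ)‖ + ‖Complex.exp (Complex.I * θ)‖ :=
          norm_sub_le _ _
      _ = 2 := by rw [Complex.norm_exp_I_mul_ofReal, norm_one]; norm_num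
      _ ≤ 2 * |θ| ^ β := by linarith [one_le_rpow hθ.le hβ0]

section GaussianMoment

variable {E : Type*} [NormedAddCommGroup E] [NormedSpace ℝ E] [FiniteDimensional ℝ E]
  [MeasurableSpace E] [BorelSpace E] (μ : Measure E) [μ.IsAddHaarMeasure]

theorem integrable_exp_neg_mul_sq_norm_mul_rpow_norm {b β : ℝ} (hb : 0 < b) (hβ : 0 ≤ β) :
    Integrable (fun v : E => exp (-b * ‖v‖ ^ 2) * ‖v‖ ^ β) μ := by
  rcases subsingleton_or_nontrivial E with hE | hE
  · exact Integrable.of_finite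
  rw [integrable_fun_norm_addHaar μ (f := fun r => exp (-b * r ^ 2) * r ^ β)]
  refine (integrableOn_rpow_mul_exp_neg_mul_sq hb (s := (finrank ℝ E - 1 : ℕ) + β)
    (by linarith [Nat.cast_nonneg (α := ℝ) (finrank ℝ E - 1)])).congr_fun
    (fun r (hr : 0 < r) => ?_) measurableSet_Ioi
  simp only [smul_eq_mul, rpow_add hr, rpow_natCast]
  ring

theorem integral_exp_neg_mul_sq_norm_mul_rpow_norm {a : ℝ} (ha : 0 < a) (β : ℝ) :
    ∫ v, exp (-a * ‖v‖ ^ 2) * ‖v‖ ^ β ∂μ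
      = a ^ (-(finrank ℝ E + β) / 2) * ∫ v, exp (-‖v‖ ^ 2) * ‖v‖ ^ β ∂μ := by
  set R : ℝ := a ^ (-(1 : ℝ) / 2)
  have hR : 0 < R := rpow_pos_of_pos ha _
  have haR : a * R ^ 2 = 1 := by
    rw [← rpow_natCast, ← rpow_mul ha.le]
    norm_num [rpow_neg_one, ha.ne']
  have hscale : ∀ v : E, exp (-a * ‖R • v‖ ^ 2) * ‖R • v‖ ^ β
      = R ^ β * (exp (-‖v‖ ^ 2) * ‖v‖ ^ β) := by
    intro v
    rw [norm_smul, norm_of_nonneg hR.le, mul_rpow hR.le (norm_nonneg v),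
      show -a * (R * ‖v‖) ^ 2 = -‖v‖ ^ 2 by linear_combination (-‖v‖ ^ 2) * haR]
    ring
  have h := Measure.integral_comp_smul_of_nonneg μ
    (fun v : E => exp (-a * ‖v‖ ^ 2) * ‖v‖ ^ β) R (hR := hR.le)
  simp only [hscale, integral_const_mul, smul_eq_mul] at h
  rw [eq_inv_mul_iff_mul_eq₀ (pow_ne_zero _ hR.ne')] at h
  rw [← h, ← mul_assoc, ← rpow_natCast, ← rpow_add hR, ← rpow_mul ha.le]
  congr 2
  ring

theorem integral_exp_neg_mul_sq_norm_mul_norm_one_sub_exp_I_le {a₀ a β L : ℝ} {θ : E → ℝ}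
    (ha₀ : 0 < a₀) (ha : a₀ ≤ a) (hβ0 : 0 ≤ β) (hβ1 : β ≤ 1) (hL : 0 ≤ L)
    (hθ : ∀ ξ, |θ ξ| ≤ L * ‖ξ‖) :
    ∫ ξ, exp (-a * ‖ξ‖ ^ 2) * ‖1 - Complex.exp (Complex.I * θ ξ)‖ ∂μ
      ≤ 2 * L ^ β * a₀ ^ (-(finrank ℝ E + β) / 2) * ∫ ξ, exp (-‖ξ‖ ^ 2) * ‖ξ‖ ^ β ∂μ := by
  have hpos : 0 < a := ha₀.trans_le ha
  have hpt : ∀ ξ, exp (-a * ‖ξ‖ ^ 2) * ‖1 - Complex.exp (Complex.I * θ ξ)‖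
      ≤ 2 * L ^ β * (exp (-a * ‖ξ‖ ^ 2) * ‖ξ‖ ^ β) := fun ξ => calc
    _ ≤ exp (-a * ‖ξ‖ ^ 2) * (2 * |θ ξ| ^ β) := by
        gcongr; exact norm_one_sub_exp_I_mul_le_two_mul_rpow hβ0 hβ1 _
    _ ≤ exp (-a * ‖ξ‖ ^ 2) * (2 * (L * ‖ξ‖) ^ β) := by gcongr; exact hθ ξ
    _ = _ := by rw [mul_rpow hL (norm_nonneg ξ)]; ring
  have hM : 0 ≤ ∫ ξ, exp (-‖ξ‖ ^ 2) * ‖ξ‖ ^ β ∂μ := integral_nonneg fun ξ => by positivity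
  calc _ ≤ ∫ ξ, 2 * L ^ β * (exp (-a * ‖ξ‖ ^ 2) * ‖ξ‖ ^ β) ∂μ :=
        integral_mono_of_nonneg (.of_forall fun ξ => by positivity)
          ((integrable_exp_neg_mul_sq_norm_mul_rpow_norm μ hpos hβ0).const_mul _) (.of_forall hpt)
    _ = 2 * L ^ β * a ^ (-(finrank ℝ E + β) / 2) * ∫ ξ, exp (-‖ξ‖ ^ 2) * ‖ξ‖ ^ β ∂μ := by
        rw [integral_const_mul, integral_exp_neg_mul_sq_norm_mul_rpow_norm μ hpos]; ring
    _ ≤ _ := by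
        refine mul_le_mul_of_nonneg_right (mul_le_mul_of_nonneg_left ?_ (by positivity)) hM
        have hdim : (0 : ℝ) ≤ finrank ℝ E := Nat.cast_nonneg _
        exact rpow_le_rpow_of_nonpos ha₀ ha (by linarith)

end GaussianMoment

theorem setIntegral_Ioo_rpow_neg_mul_le {p K T D : ℝ} {f : ℝ → ℝ} (hp : p < 1) (hK : 0 ≤ K)
    (hKT : K ≤ T) (hD : 0 ≤ D) (hf0 : ∀ u ∈ Ioo K T, 0 ≤ f u) (hfD : ∀ u ∈ Ioo K T, f u ≤ D) :
    ∫ u in Ioo K T, u ^ (-p) * f u ≤ D * (T ^ (1 - p) / (1 - p)) := by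
  have hT : 0 ≤ T := hK.trans hKT
  have hint : IntegrableOn (fun u : ℝ => u ^ (-p)) (Ioc 0 T) := by
    rw [← intervalIntegrable_iff_integrableOn_Ioc_of_le hT]
    exact intervalIntegral.intervalIntegrable_rpow' (by linarith)
  have hsub : Ioo K T ⊆ Ioc 0 T := fun u hu => ⟨hK.trans_lt hu.1, hu.2.le⟩
  calc ∫ u in Ioo K T, u ^ (-p) * f u
      ≤ ∫ u in Ioo K T, D * u ^ (-p) := by
        refine integral_mono_of_nonneg ?_ ((hint.mono_set hsub).const_mul D) ?_ <;>
          filter_upwards [ae_restrict_mem measurableSet_Ioo] with u hu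
        · exact mul_nonneg (rpow_nonneg (hK.trans hu.1.le) _) (hf0 u hu)
        · rw [mul_comm D]
          exact mul_le_mul_of_nonneg_left (hfD u hu) (rpow_nonneg (hK.trans hu.1.le) _)
    _ = D * ∫ u in Ioo K T, u ^ (-p) := integral_const_mul _ _
    _ ≤ D * ∫ u in Ioc 0 T, u ^ (-p) := by
        refine mul_le_mul_of_nonneg_left (setIntegral_mono_set hint ?_ hsub.eventuallyLE) hD
        filter_upwards [ae_restrict_mem measurableSet_Ioc] with u hu
        exact rpow_nonneg hu.1.le _
    _ = D * (T ^ (1 - p) / (1 - p)) := by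
        rw [← intervalIntegral.integral_of_le hT, integral_rpow (.inl (by linarith)),
          zero_rpow (by linarith), sub_zero, neg_add_eq_sub]

theorem stmt_8_general (d : ℕ) (H : ℝ) (hH0 : 0 < H)
    (hHd2 : H * d < 1)
    (κ : ℝ) (hκ : 0 < κ)
    (β : ℝ) (hβ0 : 0 < β)
    (hβ2 : H * β < min H (2 - 2 * (H * d))) :
    ∃ c : ℝ, ∀ (n : ℕ), 1 ≤ n → ∀ s : ℝ, 0 < s → ∀ K : ℝ, 0 < K → K < n * s / 2 →
      ∀ y : EuclideanSpace ℝ (Fin d),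
      (∫ u in Ioo K ((n:ℝ) * s / 2), u ^ (-(H * d)) *
          ∫ ξ : EuclideanSpace ℝ (Fin d),
            Real.exp (-κ * ‖ξ‖ ^ 2 * (s - u / n) ^ (2 * H)) *
              ‖1 - Complex.exp (Complex.I * ((inner ℝ ξ y / (n:ℝ) ^ H : ℝ) : ℂ))‖)
      ≤ c * (n:ℝ) ^ (1 - H * d - H * β) * s ^ (1 - 2 * (H * d) - H * β) * ‖y‖ ^ β := by
  have hβ1 : β ≤ 1 := by nlinarith [min_le_left H (2 - 2 * (H * d))]
  set M := ∫ ξ : EuclideanSpace ℝ (Fin d), exp (-‖ξ‖ ^ 2) * ‖ξ‖ ^ β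
  refine ⟨2 * M * κ ^ (-((d : ℝ) + β) / 2) / 2 ^ (1 - 2 * (H * d) - H * β) / (1 - H * d), ?_⟩
  intro n hn s hs K hK hKT y
  have hn0 : (0 : ℝ) < n := by exact_mod_cast hn
  have hnH : (0 : ℝ) < n ^ H := rpow_pos_of_pos hn0 H
  set D := 2 * (‖y‖ / n ^ H) ^ β * (κ * (s / 2) ^ (2 * H)) ^ (-((d : ℝ) + β) / 2) * M with hD
  have hphase : ∀ ξ : EuclideanSpace ℝ (Fin d), |inner ℝ ξ y / n ^ H| ≤ ‖y‖ / n ^ H * ‖ξ‖ :=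
    fun ξ => by
      rw [abs_div, abs_of_pos hnH, div_mul_eq_mul_div, mul_comm ‖y‖]
      gcongr
      exact abs_real_inner_le_norm ξ y
  have hinner : ∀ u ∈ Ioo K (n * s / 2), ∫ ξ : EuclideanSpace ℝ (Fin d),
      exp (-κ * ‖ξ‖ ^ 2 * (s - u / n) ^ (2 * H)) *
        ‖1 - Complex.exp (Complex.I * ((inner ℝ ξ y / (n:ℝ) ^ H : ℝ) : ℂ))‖ ≤ D := by
    intro u hu
    have ht : s / 2 ≤ s - u / n := by
      have : u / n < s / 2 := by rw [div_lt_iff₀ hn0]; linarith [hu.2]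
      linarith
    calc _ = ∫ ξ : EuclideanSpace ℝ (Fin d), exp (-(κ * (s - u / n) ^ (2 * H)) * ‖ξ‖ ^ 2) *
          ‖1 - Complex.exp (Complex.I * ((inner ℝ ξ y / (n:ℝ) ^ H : ℝ) : ℂ))‖ := by
          congr 1; funext ξ; congr 2; ring
      _ ≤ D := by
          simpa only [finrank_euclideanSpace_fin] using
            integral_exp_neg_mul_sq_norm_mul_norm_one_sub_exp_I_le volume
              (by positivity) (by gcongr) hβ0.le hβ1 (by positivity) hphase
  calc _ ≤ D * ((n * s / 2) ^ (1 - H * d) / (1 - H * d)) :=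
        setIntegral_Ioo_rpow_neg_mul_le hHd2 hK.le hKT.le (by positivity)
          (fun u _ => integral_nonneg fun ξ => by positivity) hinner
    _ = _ := by
      have hs2 : ∀ r : ℝ, (s / 2) ^ r = s ^ r / 2 ^ r := div_rpow hs.le zero_le_two
      rw [show 1 - 2 * (H * d) - H * β = 2 * H * (-((d : ℝ) + β) / 2) + (1 - H * d) by ring,
        rpow_add hs, rpow_add two_pos, rpow_sub hn0, hD, div_rpow (norm_nonneg y) hnH.le,
        ← rpow_mul hn0.le, mul_rpow hκ.le (by positivity), ← rpow_mul (by positivity),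
        mul_div_assoc, mul_rpow hn0.le (by positivity), hs2, hs2]
      ring

theorem stmt_8 (d : ℕ) (hd : 1 ≤ d) (H : ℝ) (hH0 : 0 < H) (hH1 : H < 1)
    (hHd1 : 1 - H < H * d) (hHd2 : H * d < 1)
    (κ : ℝ) (hκ : 0 < κ)
    (β : ℝ) (hβ0 : 0 < β) (hβ1 : 1 - H * d < H * β)
    (hβ2 : H * β < min H (2 - 2 * (H * d))) :
    ∃ c : ℝ, ∀ (n : ℕ), 1 ≤ n → ∀ s : ℝ, 0 < s → ∀ K : ℝ, 0 < K → K < n * s / 2 →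
      ∀ y : EuclideanSpace ℝ (Fin d),
      (∫ u in Ioo K ((n:ℝ) * s / 2), u ^ (-(H * d)) *
          ∫ ξ : EuclideanSpace ℝ (Fin d),
            Real.exp (-κ * ‖ξ‖ ^ 2 * (s - u / n) ^ (2 * H)) *
              ‖1 - Complex.exp (Complex.I * ((inner ℝ ξ y / (n:ℝ) ^ H : ℝ) : ℂ))‖)
      ≤ c * (n:ℝ) ^ (1 - H * d - H * β) * s ^ (1 - 2 * (H * d) - H * β) * ‖y‖ ^ β :=
  stmt_8_general d H hH0 hHd2 κ hκ β hβ0 hβ2
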